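/- Let B ∈ ℝ^{k×d}, let w* ∈ ℝ^d, and let S ⊆ ℝ^d be a subspace with dim S = m > k. Let R_init = rowspace(B) with dim R_init ≤ k, and let R_aug = Span({w*} ∪ R_init). Suppose w* ∉ R_init and cangle(R_aug, S) > 0. Then for every v ∈ ℝ^k there exists x ∈ S with ⟨Bᵀ v, x⟩ ≠ ⟨w*, x⟩; i.e., no linear head v makes the linear probe vᵀ B x agree with the ground-truth predictor w*ᵀ x on all of S. -/

import Mathlib

open Matrix

noncomputable section

/-- View a plain vector as an element of Euclidean space. -/
def toE {n : ℕ} (x : Fin n → ℝ) : EuclideanSpace ℝ (Fin n) := WithLp.toLp 2 x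

/-- Row space of a matrix, as a subspace of Euclidean space. -/
def rowspace {k d : ℕ} (B : Matrix (Fin k) (Fin d) ℝ) :
    Submodule ℝ (EuclideanSpace ℝ (Fin d)) :=
  Submodule.span ℝ (Set.range fun i => toE (B i))

/-- Cosine of the largest principal angle between subspaces `R` and `T` of `ℝ^d`. -/
def cangle {d : ℕ} (R T : Submodule ℝ (EuclideanSpace ℝ (Fin d))) : ℝ :=
  sInf {c | ∃ r ∈ R, ‖r‖ = 1 ∧ c = ‖(T.orthogonalProjection r : EuclideanSpace ℝ (Fin d))‖}

/-! If the probe `Bᵀ v` agreed with `w*` on `S`, the residual `w* - Bᵀ v` would be a nonzero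
vector of `R_aug` (nonzero because `w* ∉ rowspace B ∋ Bᵀ v`) orthogonal to `S`. Normalised, it
is a unit vector of `R_aug` with zero projection onto `S`, forcing `cangle (R_aug, S) ≤ 0`. -/

lemma toE_transpose_mulVec_mem_rowspace {k d : ℕ} (B : Matrix (Fin k) (Fin d) ℝ)
    (v : Fin k → ℝ) : toE (Bᵀ *ᵥ v) ∈ rowspace B := by
  have hsum : toE (Bᵀ *ᵥ v) = ∑ i, v i • toE (B i) := by
    ext j
    rw [WithLp.ofLp_sum, Finset.sum_apply]
    simp [toE, Matrix.mulVec, dotProduct, mul_comm]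
  rw [hsum]
  exact Submodule.sum_mem _ fun i _ => Submodule.smul_mem _ _ (Submodule.subset_span ⟨i, rfl⟩)

lemma cangle_nonpos_of_mem_orthogonal {d : ℕ} {R T : Submodule ℝ (EuclideanSpace ℝ (Fin d))}
    {r : EuclideanSpace ℝ (Fin d)} (hrR : r ∈ R) (hr : r ≠ 0) (hrT : r ∈ Tᗮ) :
    cangle R T ≤ 0 := by
  refine csInf_le ⟨0, ?_⟩ ⟨‖r‖⁻¹ • r, R.smul_mem _ hrR, norm_smul_inv_norm hr, ?_⟩
  · rintro c ⟨x, -, -, rfl⟩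
    exact norm_nonneg _
  · rw [map_smul, Submodule.orthogonalProjectionOnto_apply_of_mem_orthogonal hrT]
    simp

theorem stmt_19_general {k d : ℕ} (B : Matrix (Fin k) (Fin d) ℝ) (wstar : Fin d → ℝ)
    (S : Submodule ℝ (EuclideanSpace ℝ (Fin d)))
    (hw : toE wstar ∉ rowspace B)
    (hc : 0 < cangle (Submodule.span ℝ {toE wstar} ⊔ rowspace B) S) :
    ∀ v : Fin k → ℝ, ∃ x ∈ S,
      inner ℝ (toE (Bᵀ.mulVec v)) x ≠ (inner ℝ (toE wstar) x : ℝ) := by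
  intro v
  by_contra! hagree
  have hBv := toE_transpose_mulVec_mem_rowspace B v
  have hR : toE wstar - toE (Bᵀ *ᵥ v) ∈ Submodule.span ℝ {toE wstar} ⊔ rowspace B :=
    sub_mem (Submodule.mem_sup_left (Submodule.mem_span_singleton_self _))
      (Submodule.mem_sup_right hBv)
  have hne : toE wstar - toE (Bᵀ *ᵥ v) ≠ 0 := fun h => hw (sub_eq_zero.mp h ▸ hBv)
  have hperp : toE wstar - toE (Bᵀ *ᵥ v) ∈ Sᗮ := fun x hx => by
    rw [inner_sub_right, real_inner_comm (toE wstar), real_inner_comm (toE _),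
      hagree x hx, sub_self]
  exact (cangle_nonpos_of_mem_orthogonal hR hne hperp).not_gt hc

/-- if `w* ∉ rowspace(B)` and `cangle(Span({w*} ∪ rowspace B), S) > 0` where
`dim S = m > k`, then no linear head `v` makes the linear probe agree with the ground
truth `w*` on all of `S`. -/
theorem stmt_19 {k d m : ℕ} (B : Matrix (Fin k) (Fin d) ℝ) (wstar : Fin d → ℝ)
    (S : Submodule ℝ (EuclideanSpace ℝ (Fin d)))
    (hS : Module.finrank ℝ S = m) (hmk : k < m)
    (hw : toE wstar ∉ rowspace B)
    (hc : 0 < cangle (Submodule.span ℝ {toE wstar} ⊔ rowspace B) S) :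
    ∀ v : Fin k → ℝ, ∃ x ∈ S,
      inner ℝ (toE (Bᵀ.mulVec v)) x ≠ (inner ℝ (toE wstar) x : ℝ) :=
  stmt_19_general B wstar S hw hc

end
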